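/- arXiv:1504.01090 — 3 statements merged into one kernel-verified Lean document; each statement's English description precedes it below -/
import Mathlib

section
/- Let V be an invertible n×n matrix such that V Σ₁ Vᵀ = Λ and V Σ₂ Vᵀ = Λ' are diagonal with positive entries, and define min(Σ₁, Σ₂) = V⁻¹ diag(min(λᵢ, λ'ᵢ)) V⁻ᵀ. Then min(Σ₁, Σ₂) = Σ₁ if and only if Σ₁ ⪯ Σ₂, and min(Σ₁, Σ₂) = Σ₂ if and only if Σ₂ ⪯ Σ₁. -/
open Matrix

private lemma psd_congr {n : ℕ} (V A : Matrix (Fin n) (Fin n) ℝ)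
    (hV : IsUnit V.det) : (V * A * Vᵀ).PosSemidef ↔ A.PosSemidef := by
  constructor
  · intro h
    have := h.mul_mul_conjTranspose_same V⁻¹
    rw [conjTranspose_eq_transpose_of_trivial] at this
    have e : V⁻¹ * (V * A * Vᵀ) * V⁻¹ᵀ = A := by
      rw [transpose_nonsing_inv]
      rw [show V⁻¹ * (V * A * Vᵀ) * (Vᵀ)⁻¹ = (V⁻¹ * V) * A * (Vᵀ * (Vᵀ)⁻¹) by noncomm_ring]
      rw [nonsing_inv_mul _ hV, mul_nonsing_inv _ (by simpa using hV)]
      simp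
    rwa [e] at this
  · intro h
    have := h.mul_mul_conjTranspose_same V
    rwa [conjTranspose_eq_transpose_of_trivial] at this

private lemma key {n : ℕ} (S V : Matrix (Fin n) (Fin n) ℝ) (d lam : Fin n → ℝ)
    (hV : IsUnit V.det) (h : V * S * Vᵀ = Matrix.diagonal lam) :
    (V⁻¹ * Matrix.diagonal d * (V⁻¹)ᵀ = S ↔ d = lam) := by
  have hVt : IsUnit Vᵀ.det := by simpa using hV
  constructor
  · intro he
    have : V * (V⁻¹ * Matrix.diagonal d * (V⁻¹)ᵀ) * Vᵀ = Matrix.diagonal lam := by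
      rw [he, h]
    rw [transpose_nonsing_inv,
      show V * (V⁻¹ * Matrix.diagonal d * (Vᵀ)⁻¹) * Vᵀ
        = (V * V⁻¹) * Matrix.diagonal d * ((Vᵀ)⁻¹ * Vᵀ) by noncomm_ring,
      mul_nonsing_inv _ hV, nonsing_inv_mul _ hVt, one_mul, mul_one] at this
    exact diagonal_injective this
  · intro he
    subst he
    rw [← h, transpose_nonsing_inv,
      show V⁻¹ * (V * S * Vᵀ) * (Vᵀ)⁻¹ = (V⁻¹ * V) * S * (Vᵀ * (Vᵀ)⁻¹) by noncomm_ring,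
      nonsing_inv_mul _ hV, mul_nonsing_inv _ hVt, one_mul, mul_one]

/-- min(Σ₁,Σ₂) = Σ₁ iff Σ₁ ⪯ Σ₂, and min(Σ₁,Σ₂) = Σ₂ iff Σ₂ ⪯ Σ₁. -/
theorem stmt_3 {n : ℕ} (S1 S2 V : Matrix (Fin n) (Fin n) ℝ)
    (lam lam' : Fin n → ℝ)
    (hS1 : S1.PosDef) (hS2 : S2.PosDef)
    (hV : IsUnit V.det)
    (h1 : V * S1 * Vᵀ = Matrix.diagonal lam)
    (h2 : V * S2 * Vᵀ = Matrix.diagonal lam')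
    (hlam : ∀ i, 0 < lam i) (hlam' : ∀ i, 0 < lam' i) :
    (V⁻¹ * Matrix.diagonal (fun i => min (lam i) (lam' i)) * (V⁻¹)ᵀ = S1
        ↔ (S2 - S1).PosSemidef) ∧
    (V⁻¹ * Matrix.diagonal (fun i => min (lam i) (lam' i)) * (V⁻¹)ᵀ = S2
        ↔ (S1 - S2).PosSemidef) := by
  have hd21 : V * (S2 - S1) * Vᵀ = Matrix.diagonal (fun i => lam' i - lam i) := by
    have : V * (S2 - S1) * Vᵀ = V * S2 * Vᵀ - V * S1 * Vᵀ := by noncomm_ring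
    rw [this, h1, h2, diagonal_sub]
  have hd12 : V * (S1 - S2) * Vᵀ = Matrix.diagonal (fun i => lam i - lam' i) := by
    have : V * (S1 - S2) * Vᵀ = V * S1 * Vᵀ - V * S2 * Vᵀ := by noncomm_ring
    rw [this, h1, h2, diagonal_sub]
  constructor
  · rw [key S1 V _ lam hV h1, ← psd_congr V _ hV, hd21, posSemidef_diagonal_iff]
    constructor
    · intro h i; have := congrFun h i; simp only [min_eq_left_iff] at this ⊢; linarith
    · intro h; funext i; have := h i; simp only [min_eq_left_iff]; linarith
  · rw [key S2 V _ lam' hV h2, ← psd_congr V _ hV, hd12, posSemidef_diagonal_iff]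
    constructor
    · intro h i; have := congrFun h i; simp only [min_eq_right_iff] at this ⊢; linarith
    · intro h; funext i; have := h i; simp only [min_eq_right_iff]; linarith
end

section
/- Let Σ₁, Σ₂ be symmetric positive-definite n×n matrices simultaneously diagonalized by an invertible V with |det V| = 1: V Σ₁ Vᵀ = diag(λᵢ), V Σ₂ Vᵀ = diag(λ'ᵢ). Then the maximum of det(Σ) over all symmetric positive-definite Σ satisfying Σ ⪯ Σ₁ and Σ ⪯ Σ₂ equals ∏ᵢ min(λᵢ, λ'ᵢ), i.e., equals det(min(Σ₁, Σ₂)) where min(Σ₁, Σ₂) = V⁻¹ diag(min(λᵢ, λ'ᵢ)) V⁻ᵀ. -/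
/-!
Conjugating by `V` turns the problem into one about `T = V Σ Vᵀ`, and since `|det V| = 1` this
changes no determinant. The constraints `T ⪯ diag λ` and `T ⪯ diag λ'` bound each diagonal entry
`Tᵢᵢ` by `min (λᵢ, λ'ᵢ)`, and Hadamard's inequality `det T ≤ ∏ Tᵢᵢ` gives the upper bound. It is
attained by `T = diag (min (λᵢ, λ'ᵢ))`, i.e. by `Σ = V⁻¹ diag (min (λᵢ, λ'ᵢ)) V⁻ᵀ`.
-/

open Matrix

namespace Matrix

lemma diag_le_of_posSemidef_diagonal_sub {n : Type*} [DecidableEq n] {T : Matrix n n ℝ}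
    {a : n → ℝ} (h : (diagonal a - T).PosSemidef) (i : n) : T i i ≤ a i := by
  simpa using h.diag_nonneg (i := i)

lemma PosSemidef.mul_mul_transpose {n : Type*} [Fintype n] {A : Matrix n n ℝ}
    (hA : A.PosSemidef) (V : Matrix n n ℝ) : (V * A * Vᵀ).PosSemidef := by
  simpa using hA.mul_mul_conjTranspose_same V

variable {n : Type*} [Fintype n] [DecidableEq n]

lemma PosSemidef.det_le_one_of_diag_eq_one {B : Matrix n n ℝ} (hB : B.PosSemidef)
    (hdiag : ∀ i, B i i = 1) : B.det ≤ 1 := by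
  set μ := hB.isHermitian.eigenvalues
  have hsum : ∑ i, (μ i - 1) = 0 := by
    have htr := hB.isHermitian.trace_eq_sum_eigenvalues
    simp only [trace, diag, hdiag, RCLike.ofReal_real_eq_id, id] at htr
    simp [Finset.sum_sub_distrib, ← htr, μ]
  -- `x ≤ exp (x - 1)` for each eigenvalue, and the exponents sum to zero
  calc B.det = ∏ i, μ i := by simpa using hB.isHermitian.det_eq_prod_eigenvalues
    _ ≤ ∏ i, Real.exp (μ i - 1) :=
        Finset.prod_le_prod (fun i _ => hB.eigenvalues_nonneg i)
          (fun i _ => by linarith [Real.add_one_le_exp (μ i - 1)])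
    _ = 1 := by rw [← Real.exp_sum, hsum, Real.exp_zero]

theorem PosDef.det_le_prod_diag {T : Matrix n n ℝ} (hT : T.PosDef) : T.det ≤ ∏ i, T i i := by
  set d : n → ℝ := fun i => Real.sqrt (T i i)
  have hd : ∀ i, d i * d i = T i i := fun i => Real.mul_self_sqrt hT.diag_pos.le
  have hd_pos : ∀ i, 0 < d i := fun i => Real.sqrt_pos.2 hT.diag_pos
  set E := diagonal fun i => (d i)⁻¹
  have hB : (E * T * E).PosSemidef := by
    simpa [E] using hT.posSemidef.mul_mul_transpose E
  have hBdiag : ∀ i, (E * T * E) i i = 1 := fun i => by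
    simp only [E, mul_diagonal, diagonal_mul, ← hd i]
    field_simp [(hd_pos i).ne']
  have hprod : (∏ i, (d i)⁻¹) * ∏ i, d i = 1 := by
    rw [Finset.prod_inv_distrib, inv_mul_cancel₀ (Finset.prod_pos fun i _ => hd_pos i).ne']
  have hdet : T.det = (E * T * E).det * ∏ i, T i i := by
    rw [det_mul, det_mul, det_diagonal, ← Finset.prod_congr rfl fun i _ => hd i,
      Finset.prod_mul_distrib]
    linear_combination (-T.det * ((∏ i, (d i)⁻¹) * ∏ i, d i + 1)) * hprod
  calc T.det = (E * T * E).det * ∏ i, T i i := hdet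
    _ ≤ 1 * ∏ i, T i i := by
      gcongr
      · exact Finset.prod_nonneg fun i _ => hT.diag_pos.le
      · exact hB.det_le_one_of_diag_eq_one hBdiag
    _ = ∏ i, T i i := one_mul _

theorem PosDef.det_le_prod_min_of_le_diagonal {T : Matrix n n ℝ} {a b : n → ℝ} (hT : T.PosDef)
    (ha : (diagonal a - T).PosSemidef) (hb : (diagonal b - T).PosSemidef) :
    T.det ≤ ∏ i, min (a i) (b i) :=
  hT.det_le_prod_diag.trans <| Finset.prod_le_prod (fun _ _ => hT.diag_pos.le)
    fun i _ => le_min (diag_le_of_posSemidef_diagonal_sub ha i)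
      (diag_le_of_posSemidef_diagonal_sub hb i)

lemma PosDef.mul_mul_transpose_of_isUnit_det {A V : Matrix n n ℝ} (hA : A.PosDef)
    (hV : IsUnit V.det) : (V * A * Vᵀ).PosDef := by
  simpa [star_eq_conjTranspose] using
    ((isUnit_iff_isUnit_det V).2 hV).posDef_star_right_conjugate_iff.2 hA

lemma det_mul_mul_transpose_of_abs_det_eq_one {V : Matrix n n ℝ} (hV : |V.det| = 1)
    (D : Matrix n n ℝ) : (V * D * Vᵀ).det = D.det := by
  rw [det_mul, det_mul, det_transpose, mul_right_comm, ← sq, ← sq_abs, hV, one_pow, one_mul]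

lemma abs_det_nonsing_inv_of_abs_det_eq_one {V : Matrix n n ℝ} (hV : |V.det| = 1) :
    |V⁻¹.det| = 1 := by
  rw [det_nonsing_inv, Ring.inverse_eq_inv', abs_inv, hV, inv_one]

lemma nonsing_inv_mul_mul_transpose_cancel {V : Matrix n n ℝ} (hV : IsUnit V.det)
    (S : Matrix n n ℝ) : V⁻¹ * (V * S * Vᵀ) * (V⁻¹)ᵀ = S := by
  rw [transpose_nonsing_inv, Matrix.mul_assoc V, ← Matrix.mul_assoc V⁻¹, nonsing_inv_mul _ hV,
    Matrix.one_mul, Matrix.mul_assoc, mul_nonsing_inv _ (by rwa [det_transpose]), Matrix.mul_one]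

end Matrix

theorem stmt_4_general {n : ℕ} (S1 S2 V : Matrix (Fin n) (Fin n) ℝ)
    (lam lam' : Fin n → ℝ)
    (hV : IsUnit V.det) (hdet : |V.det| = 1)
    (h1 : V * S1 * Vᵀ = Matrix.diagonal lam)
    (h2 : V * S2 * Vᵀ = Matrix.diagonal lam')
    (hlam : ∀ i, 0 < lam i) (hlam' : ∀ i, 0 < lam' i) :
    IsGreatest {d : ℝ | ∃ S : Matrix (Fin n) (Fin n) ℝ, S.PosDef ∧
        (S1 - S).PosSemidef ∧ (S2 - S).PosSemidef ∧ d = S.det}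
      (∏ i, min (lam i) (lam' i)) ∧
    (∏ i, min (lam i) (lam' i))
      = (V⁻¹ * Matrix.diagonal (fun i => min (lam i) (lam' i)) * (V⁻¹)ᵀ).det := by
  have hdet_min : (V⁻¹ * diagonal (fun i => min (lam i) (lam' i)) * (V⁻¹)ᵀ).det
      = ∏ i, min (lam i) (lam' i) := by
    rw [det_mul_mul_transpose_of_abs_det_eq_one (abs_det_nonsing_inv_of_abs_det_eq_one hdet),
      det_diagonal]
  refine ⟨⟨⟨_, ?_, ?_, ?_, hdet_min.symm⟩, ?_⟩, hdet_min.symm⟩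
  · exact (PosDef.diagonal fun i => lt_min (hlam i) (hlam' i)).mul_mul_transpose_of_isUnit_det
      (isUnit_nonsing_inv_det _ hV)
  · rw [← nonsing_inv_mul_mul_transpose_cancel hV S1, h1, ← Matrix.sub_mul, ← Matrix.mul_sub,
      diagonal_sub]
    exact (PosSemidef.diagonal fun i => sub_nonneg.2 (min_le_left _ _)).mul_mul_transpose _
  · rw [← nonsing_inv_mul_mul_transpose_cancel hV S2, h2, ← Matrix.sub_mul, ← Matrix.mul_sub,
      diagonal_sub]
    exact (PosSemidef.diagonal fun i => sub_nonneg.2 (min_le_right _ _)).mul_mul_transpose _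
  · rintro _ ⟨S, hS, hS1, hS2, rfl⟩
    rw [← det_mul_mul_transpose_of_abs_det_eq_one hdet S]
    refine (hS.mul_mul_transpose_of_isUnit_det hV).det_le_prod_min_of_le_diagonal ?_ ?_
    · rw [← h1, ← Matrix.sub_mul, ← Matrix.mul_sub]
      exact hS1.mul_mul_transpose V
    · rw [← h2, ← Matrix.sub_mul, ← Matrix.mul_sub]
      exact hS2.mul_mul_transpose V

/-- The maximum of det Σ over PD matrices Σ with Σ ⪯ Σ₁ and Σ ⪯ Σ₂ equals
∏ min(λᵢ,λ'ᵢ) = det(min(Σ₁,Σ₂)), when |det V| = 1. -/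
theorem stmt_4 {n : ℕ} (S1 S2 V : Matrix (Fin n) (Fin n) ℝ)
    (lam lam' : Fin n → ℝ)
    (hS1 : S1.PosDef) (hS2 : S2.PosDef)
    (hV : IsUnit V.det) (hdet : |V.det| = 1)
    (h1 : V * S1 * Vᵀ = Matrix.diagonal lam)
    (h2 : V * S2 * Vᵀ = Matrix.diagonal lam')
    (hlam : ∀ i, 0 < lam i) (hlam' : ∀ i, 0 < lam' i) :
    IsGreatest {d : ℝ | ∃ S : Matrix (Fin n) (Fin n) ℝ, S.PosDef ∧
        (S1 - S).PosSemidef ∧ (S2 - S).PosSemidef ∧ d = S.det}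
      (∏ i, min (lam i) (lam' i)) ∧
    (∏ i, min (lam i) (lam' i))
      = (V⁻¹ * Matrix.diagonal (fun i => min (lam i) (lam' i)) * (V⁻¹)ᵀ).det :=
  stmt_4_general S1 S2 V lam lam' hV hdet h1 h2 hlam hlam'
end

section
/- Consider the scalar optimization: minimize 1/D'₁ + 1/D'₂ over D'₁ > Σ₁ > 0, D'₂ > Σ₂ > 0 subject to (D'₁ − Σ₁)(D'₂ − Σ₂) = β', where β' > 0. If √β' > max(Σ₁, Σ₂), then the unique minimizer has D'₁* = (β' − Σ₁Σ₂)/(√β' − Σ₂), and it is the unique global minimum on the constraint curve. -/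
/-- If √β' > max(Σ₁,Σ₂), the function f(t) = 1/t + 1/(Σ₂ + β'/(t−Σ₁)) on (Σ₁,∞)
attains its unique global minimum at t* = (β' − Σ₁Σ₂)/(√β' − Σ₂). -/
theorem stmt_14 (S1 S2 b : ℝ) (h1 : 0 < S1) (h2 : 0 < S2) (hb : 0 < b)
    (hmax : max S1 S2 < Real.sqrt b) :
    S1 < (b - S1 * S2) / (Real.sqrt b - S2) ∧
    ∀ t : ℝ, S1 < t → t ≠ (b - S1 * S2) / (Real.sqrt b - S2) →
      1 / ((b - S1 * S2) / (Real.sqrt b - S2))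
        + 1 / (S2 + b / ((b - S1 * S2) / (Real.sqrt b - S2) - S1))
      < 1 / t + 1 / (S2 + b / (t - S1)) := by
  set s := Real.sqrt b with hsdef
  have hs0 : 0 < s := Real.sqrt_pos.mpr hb
  have hsb : s ^ 2 = b := Real.sq_sqrt hb.le
  have hs1 : S1 < s := lt_of_le_of_lt (le_max_left _ _) hmax
  have hs2 : S2 < s := lt_of_le_of_lt (le_max_right _ _) hmax
  have hba : S1 * S2 < b := by nlinarith
  have hd2 : 0 < s - S2 := by linarith
  have hQ : 0 < s ^ 2 - S1 * S2 := by nlinarith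
  have htstar : S1 < (b - S1 * S2) / (s - S2) := by
    rw [lt_div_iff₀ hd2]; nlinarith
  refine ⟨htstar, ?_⟩
  intro t ht hne
  have ht0 : 0 < t := h1.trans ht
  have htS : 0 < t - S1 := by linarith
  have hne' : (s - S2) * t - (s ^ 2 - S1 * S2) ≠ 0 := by
    intro h
    apply hne
    rw [eq_div_iff (ne_of_gt hd2), ← hsb]
    linarith
  have hk : 0 < ((s - S2) * t - (s ^ 2 - S1 * S2)) ^ 2 := by positivity
  rw [← hsb]
  have hA : (s ^ 2 - S1 * S2) / (s - S2) - S1 = s * (s - S1) / (s - S2) := by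
    field_simp; ring
  rw [hA]
  have hs1' : 0 < s - S1 := by linarith
  have hB : S2 + s ^ 2 / (s * (s - S1) / (s - S2)) = (s ^ 2 - S1 * S2) / (s - S1) := by
    rw [div_div_eq_mul_div]
    field_simp
    ring
  rw [hB, one_div_div, one_div_div]
  have hD : 0 < S2 * (t - S1) + s ^ 2 := by positivity
  have hC : S2 + s ^ 2 / (t - S1) = (S2 * (t - S1) + s ^ 2) / (t - S1) := by
    field_simp
  rw [hC, one_div_div]
  rw [div_add_div _ _ (ne_of_gt hQ) (ne_of_gt hQ),
      div_add_div _ _ (ne_of_gt ht0) (ne_of_gt hD),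
      div_lt_div_iff₀ (by positivity) (by positivity)]
  nlinarith [hk, mul_pos ht0 hD, sq_nonneg ((s - S2) * t - (s ^ 2 - S1 * S2))]
end
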